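/- Define w(ℓ) = 2·h(ℓ) − |ℓ| for ℓ ∈ ℕ^r. Then for every ℓ ∈ ℕ^r and every subset I ⊆ {1,…,r}, the maximal weight over the vertices of the cube (ℓ,I) equals w(ℓ) plus the codimension of F(ℓ+E_I) in F(ℓ): max{w(ℓ+E_J) : J ⊆ I} = w(ℓ) + (h(ℓ+E_I) − h(ℓ)). -/

import Mathlib

/-- `Gbar r ℓ` is the subspace of `r`-tuples of power series whose `i`-th component has
order at least `ℓ i`, for every `i`. -/
noncomputable def Gbar (r : ℕ) (ℓ : Fin r → ℕ) : Submodule ℂ (Fin r → PowerSeries ℂ) where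
  carrier := {f | ∀ i : Fin r, (ℓ i : ℕ∞) ≤ (f i).order}
  zero_mem' := by
    intro i
    simp [PowerSeries.order_zero]
  add_mem' := by
    intro a b ha hb i
    refine le_trans (le_min (ha i) (hb i)) ?_
    simpa using PowerSeries.min_order_le_order_add (a i) (b i)
  smul_mem' := by
    intro c f hf i
    refine PowerSeries.le_order _ _ ?_
    intro n hn
    have hlt : (n : ℕ∞) < ((f : Fin r → PowerSeries ℂ) i).order := lt_of_lt_of_le hn (hf i)
    have : (PowerSeries.coeff n) ((c • f) i) = c • (PowerSeries.coeff n) (f i) := by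
      simp
    rw [this, PowerSeries.coeff_of_lt_order n hlt, smul_zero]

/-- `F O ℓ = O ∩ Ḡ(ℓ)`, the valuation filtration of the subspace `O`. -/
noncomputable def Ffil (r : ℕ) (O : Submodule ℂ (Fin r → PowerSeries ℂ)) (ℓ : Fin r → ℕ) :
    Submodule ℂ (Fin r → PowerSeries ℂ) :=
  O ⊓ Gbar r ℓ

/-- `hfun O ℓ = dim_ℂ O / (O ∩ Ḡ(ℓ))`, the Hilbert function of the filtration. -/
noncomputable def hfun (r : ℕ) (O : Submodule ℂ (Fin r → PowerSeries ℂ)) (ℓ : Fin r → ℕ) : ℕ :=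
  Module.finrank ℂ (O ⧸ (Gbar r ℓ).comap O.subtype)

/-- `hbarfun O ℓ = dim_ℂ V / (Ḡ(ℓ) + O)`. -/
noncomputable def hbarfun (r : ℕ) (O : Submodule ℂ (Fin r → PowerSeries ℂ)) (ℓ : Fin r → ℕ) : ℕ :=
  Module.finrank ℂ ((Fin r → PowerSeries ℂ) ⧸ (Gbar r ℓ ⊔ O))

/-- `eN i` is the `i`-th standard basis vector of `ℕ^r`. -/
def eN {r : ℕ} (i : Fin r) : Fin r → ℕ := fun j => if j = i then 1 else 0

/-- `eNI I` is the lattice vector `E_I = ∑_{i ∈ I} E_i` in `ℕ^r`. -/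
def eNI {r : ℕ} (I : Finset (Fin r)) : Fin r → ℕ := fun v => if v ∈ I then 1 else 0

/-- The weight function `w(ℓ) = 2h(ℓ) − |ℓ|`. -/
noncomputable def wfun (r : ℕ) (O : Submodule ℂ (Fin r → PowerSeries ℂ)) (ℓ : Fin r → ℕ) : ℤ :=
  2 * (hfun r O ℓ : ℤ) - ∑ i, (ℓ i : ℤ)

/-!
Passing from `ℓ` to `ℓ + E_i` cuts `F(ℓ)` down by one linear form, the coefficient of `T^{ℓ_i}` in
the `i`-th component, so `h` grows by at most one per step; hence
`w(ℓ + E_J) ≤ w(ℓ) + (h(ℓ + E_J) - h(ℓ)) ≤ w(ℓ) + (h(ℓ + E_I) - h(ℓ))` for `J ⊆ I`.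
For equality, note that `Ḡ(ℓ' + E_i) = Ḡ(ℓ') ∩ Ḡ(ℓ + E_i)` whenever `ℓ ≤ ℓ'` and `ℓ'_i = ℓ_i`:
a step in direction `i` that does not raise `h` at `ℓ` does not raise it at `ℓ'` either. Adding the
directions of `I` one at a time and keeping those that raise `h` gives `J ⊆ I` with
`h(ℓ + E_J) = h(ℓ) + |J| = h(ℓ + E_I)`, a vertex where the bound is attained.
-/

open Module Finset

section QuotientFinrank

variable {K X : Type*} [DivisionRing K] [AddCommGroup X] [Module K X]

theorem Submodule.finrank_quotient_eq_add_finrank_map_mkQ {N M : Submodule K X} (h : N ≤ M)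
    [FiniteDimensional K (X ⧸ N)] :
    finrank K (X ⧸ N) = finrank K (X ⧸ M) + finrank K (M.map N.mkQ) := by
  rw [← (N.quotientQuotientEquivQuotient M h).finrank_eq, Submodule.finrank_quotient_add_finrank]

theorem Submodule.finrank_quotient_le_of_le {N M : Submodule K X} (h : N ≤ M)
    [FiniteDimensional K (X ⧸ N)] : finrank K (X ⧸ M) ≤ finrank K (X ⧸ N) := by
  rw [finrank_quotient_eq_add_finrank_map_mkQ h]
  exact Nat.le_add_right _ _

theorem Submodule.eq_of_le_of_finrank_quotient_eq {N M : Submodule K X} (h : N ≤ M)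
    [FiniteDimensional K (X ⧸ N)] (he : finrank K (X ⧸ M) = finrank K (X ⧸ N)) : N = M := by
  have hmap : M.map N.mkQ = ⊥ :=
    Submodule.finrank_eq_zero.mp (by have := finrank_quotient_eq_add_finrank_map_mkQ h; omega)
  refine le_antisymm h ?_
  rwa [← LinearMap.le_ker_iff_map, Submodule.ker_mkQ] at hmap

theorem Submodule.finrank_quotient_inf_ker_le (N : Submodule K X) (f : X →ₗ[K] K)
    [FiniteDimensional K (X ⧸ N)] :
    finrank K (X ⧸ (N ⊓ LinearMap.ker f)) ≤ finrank K (X ⧸ N) + 1 := by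
  have hker : N ⊓ LinearMap.ker f = LinearMap.ker (N.mkQ.prod f) := by
    rw [LinearMap.ker_prod, Submodule.ker_mkQ]
  calc finrank K (X ⧸ (N ⊓ LinearMap.ker f))
      = finrank K (X ⧸ LinearMap.ker (N.mkQ.prod f)) := by rw [hker]
    _ = finrank K (LinearMap.range (N.mkQ.prod f)) := (LinearMap.quotKerEquivRange _).finrank_eq
    _ ≤ finrank K ((X ⧸ N) × K) := Submodule.finrank_le _
    _ = finrank K (X ⧸ N) + 1 := by rw [Module.finrank_prod, Module.finrank_self]

end QuotientFinrank

theorem Submodule.CoFG.comap {R M N : Type*} [Ring R] [IsNoetherianRing R] [AddCommGroup M]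
    [Module R M] [AddCommGroup N] [Module R N] {S : Submodule R N} (hS : S.CoFG) (f : M →ₗ[R] N) :
    (S.comap f).CoFG := by
  rw [← S.ker_mkQ, ← LinearMap.ker_comp]
  exact CoFG.ker _

section Gbar

variable {r : ℕ}

theorem mem_Gbar_iff {ℓ : Fin r → ℕ} {f : Fin r → PowerSeries ℂ} :
    f ∈ Gbar r ℓ ↔ ∀ i, ∀ n < ℓ i, PowerSeries.coeff n (f i) = 0 :=
  forall_congr' fun i =>
    ⟨fun h n hn => PowerSeries.coeff_of_lt_order n (lt_of_lt_of_le (by exact_mod_cast hn) h),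
      PowerSeries.nat_le_order _ _⟩

theorem Gbar_sup (ℓ ℓ' : Fin r → ℕ) : Gbar r (ℓ ⊔ ℓ') = Gbar r ℓ ⊓ Gbar r ℓ' := by
  ext f
  simp only [Submodule.mem_inf, mem_Gbar_iff, Pi.sup_apply, lt_sup_iff, or_imp, forall_and]

theorem Gbar_antitone : Antitone (Gbar r) := fun ℓ ℓ' h => by
  rw [← sup_eq_right.mpr h, Gbar_sup]
  exact inf_le_left

theorem Gbar_add_eN (ℓ : Fin r → ℕ) (i : Fin r) :
    Gbar r (ℓ + eN i) = Gbar r ℓ ⊓ LinearMap.ker (PowerSeries.coeff (ℓ i) ∘ₗ LinearMap.proj i) := by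
  ext f
  simp only [Submodule.mem_inf, mem_Gbar_iff, LinearMap.mem_ker, LinearMap.comp_apply,
    LinearMap.proj_apply, Pi.add_apply, eN]
  constructor
  · intro h
    exact ⟨fun j n hn => h j n (by split_ifs <;> omega), h i (ℓ i) (by simp)⟩
  · rintro ⟨h, hi⟩ j n hn
    by_cases hj : j = i
    · subst hj
      rcases (show n < ℓ j ∨ n = ℓ j by simp at hn; omega) with hn | rfl
      exacts [h j n hn, hi]
    · exact h j n (by simpa [hj] using hn)

theorem Gbar_eq_ker (ℓ : Fin r → ℕ) :
    Gbar r ℓ = LinearMap.ker (LinearMap.pi fun i =>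
      LinearMap.pi fun k : Fin (ℓ i) => PowerSeries.coeff (k : ℕ) ∘ₗ LinearMap.proj i) := by
  ext f
  simp only [mem_Gbar_iff, LinearMap.mem_ker, funext_iff, LinearMap.pi_apply,
    LinearMap.comp_apply, LinearMap.proj_apply, Pi.zero_apply, Fin.forall_iff]

theorem Gbar_cofg (ℓ : Fin r → ℕ) : (Gbar r ℓ).CoFG := by
  rw [Gbar_eq_ker]
  exact Submodule.CoFG.ker _

instance (O : Submodule ℂ (Fin r → PowerSeries ℂ)) (ℓ : Fin r → ℕ) :
    FiniteDimensional ℂ (O ⧸ (Gbar r ℓ).comap O.subtype) :=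
  (Gbar_cofg ℓ).comap O.subtype

end Gbar

section eNI

variable {r : ℕ}

theorem eNI_empty : eNI (∅ : Finset (Fin r)) = 0 := by
  funext j
  simp [eNI]

theorem eNI_insert {i : Fin r} {I : Finset (Fin r)} (hi : i ∉ I) :
    eNI (insert i I) = eN i + eNI I := by
  funext j
  by_cases hj : j = i
  · subst hj
    simp [eNI, eN, hi]
  · simp [eNI, eN, hj]

theorem eNI_mono {I J : Finset (Fin r)} (h : J ⊆ I) : eNI J ≤ eNI I := fun j => by
  by_cases hj : j ∈ J
  · simp [eNI, hj, h hj]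
  · simp [eNI, hj]

theorem sum_eNI (J : Finset (Fin r)) : ∑ j, (eNI J j : ℤ) = #J := by
  simp [eNI]

end eNI

section hfun

variable {r : ℕ} (O : Submodule ℂ (Fin r → PowerSeries ℂ))

theorem hfun_mono {ℓ ℓ' : Fin r → ℕ} (h : ℓ ≤ ℓ') : hfun r O ℓ ≤ hfun r O ℓ' :=
  Submodule.finrank_quotient_le_of_le (Submodule.comap_mono (Gbar_antitone h))

theorem hfun_add_eN_le (ℓ : Fin r → ℕ) (i : Fin r) : hfun r O (ℓ + eN i) ≤ hfun r O ℓ + 1 := by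
  unfold hfun
  rw [Gbar_add_eN, Submodule.comap_inf, ← LinearMap.ker_comp]
  exact Submodule.finrank_quotient_inf_ker_le _ _

theorem comap_Gbar_add_eN_of_hfun_eq {ℓ : Fin r → ℕ} {i : Fin r}
    (h : hfun r O (ℓ + eN i) = hfun r O ℓ) :
    (Gbar r (ℓ + eN i)).comap O.subtype = (Gbar r ℓ).comap O.subtype := by
  have hle : (Gbar r (ℓ + eN i)).comap O.subtype ≤ (Gbar r ℓ).comap O.subtype :=
    Submodule.comap_mono (Gbar_antitone le_self_add)
  exact Submodule.eq_of_le_of_finrank_quotient_eq hle h.symm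

theorem hfun_add_eN_eq_of_le {ℓ ℓ' : Fin r → ℕ} {i : Fin r}
    (h : hfun r O (ℓ + eN i) = hfun r O ℓ) (hle : ℓ ≤ ℓ') (hi : ℓ' i = ℓ i) :
    hfun r O (ℓ' + eN i) = hfun r O ℓ' := by
  have hsup : ℓ' + eN i = ℓ' ⊔ (ℓ + eN i) := by
    funext j
    by_cases hj : j = i
    · subst hj
      simp [eN, hi]
    · simpa [eN, hj] using hle j
  unfold hfun
  rw [hsup, Gbar_sup, Submodule.comap_inf, comap_Gbar_add_eN_of_hfun_eq O h, ← Submodule.comap_inf,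
    ← Gbar_sup, sup_eq_left.mpr hle]

theorem hfun_add_eNI_le (ℓ : Fin r → ℕ) (I : Finset (Fin r)) :
    hfun r O (ℓ + eNI I) ≤ hfun r O ℓ + #I := by
  induction I using Finset.induction_on generalizing ℓ with
  | empty => simp [eNI_empty]
  | @insert i I hi ih =>
    rw [eNI_insert hi, ← add_assoc, Finset.card_insert_of_notMem hi]
    have := hfun_add_eN_le O ℓ i
    have := ih (ℓ + eN i)
    omega

theorem exists_subset_hfun_add_eNI_eq (ℓ : Fin r → ℕ) (I : Finset (Fin r)) :
    ∃ J ⊆ I, hfun r O (ℓ + eNI J) = hfun r O (ℓ + eNI I) ∧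
      hfun r O (ℓ + eNI J) = hfun r O ℓ + #J := by
  induction I using Finset.induction_on generalizing ℓ with
  | empty => exact ⟨∅, subset_rfl, rfl, by simp [eNI_empty]⟩
  | @insert i I hi ih =>
    by_cases hstep : hfun r O (ℓ + eN i) = hfun r O ℓ
    · obtain ⟨J, hJI, hJ_top, hJ_card⟩ := ih ℓ
      refine ⟨J, hJI.trans (Finset.subset_insert i I), ?_, hJ_card⟩
      rw [hJ_top, eNI_insert hi, add_comm (eN i), ← add_assoc,
        hfun_add_eN_eq_of_le O hstep le_self_add
          (by simp [eNI, hi])]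
    · have hrise : hfun r O (ℓ + eN i) = hfun r O ℓ + 1 := by
        have := hfun_add_eN_le O ℓ i
        have := hfun_mono O (le_self_add : ℓ ≤ ℓ + eN i)
        omega
      obtain ⟨J, hJI, hJ_top, hJ_card⟩ := ih (ℓ + eN i)
      have hiJ : i ∉ J := fun h => hi (hJI h)
      refine ⟨insert i J, Finset.insert_subset_insert i hJI, ?_, ?_⟩
      · rwa [eNI_insert hiJ, eNI_insert hi, ← add_assoc, ← add_assoc]
      · rw [eNI_insert hiJ, ← add_assoc, hJ_card, hrise, Finset.card_insert_of_notMem hiJ]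
        ring

theorem wfun_add_eNI (ℓ : Fin r → ℕ) (J : Finset (Fin r)) :
    wfun r O (ℓ + eNI J) = 2 * (hfun r O (ℓ + eNI J) : ℤ) - ∑ i, (ℓ i : ℤ) - #J := by
  simp only [wfun, Pi.add_apply, Nat.cast_add, Finset.sum_add_distrib, sum_eNI]
  ring

end hfun

theorem statement14_general (r : ℕ) (O : Submodule ℂ (Fin r → PowerSeries ℂ))
    (ℓ : Fin r → ℕ) (I : Finset (Fin r)) :
    I.powerset.sup' (Finset.powerset_nonempty I) (fun J => wfun r O (ℓ + eNI J))
      = wfun r O ℓ + ((hfun r O (ℓ + eNI I) : ℤ) - (hfun r O ℓ : ℤ)) := by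
  apply le_antisymm
  · refine Finset.sup'_le _ _ fun J hJ => ?_
    have hcard := hfun_add_eNI_le O ℓ J
    have hmono := hfun_mono O (add_le_add_right (eNI_mono (Finset.mem_powerset.mp hJ)) ℓ)
    rw [wfun_add_eNI, wfun]
    omega
  · obtain ⟨J, hJI, hJ_top, hJ_card⟩ := exists_subset_hfun_add_eNI_eq O ℓ I
    refine le_trans (le_of_eq ?_) (Finset.le_sup' _ (Finset.mem_powerset.mpr hJI))
    rw [wfun_add_eNI, wfun]
    omega

/-- the maximal weight over the vertices of the cube `(ℓ, I)` equals
`w(ℓ)` plus the codimension of `F(ℓ+E_I)` in `F(ℓ)`, i.e.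
`max{w(ℓ+E_J) : J ⊆ I} = w(ℓ) + (h(ℓ+E_I) − h(ℓ))`. -/
theorem statement14 (r : ℕ) (hr : 1 ≤ r) (O : Submodule ℂ (Fin r → PowerSeries ℂ))
    (ℓ : Fin r → ℕ) (I : Finset (Fin r)) :
    I.powerset.sup' (Finset.powerset_nonempty I) (fun J => wfun r O (ℓ + eNI J))
      = wfun r O ℓ + ((hfun r O (ℓ + eNI I) : ℤ) - (hfun r O ℓ : ℤ)) :=
  statement14_general r O ℓ I
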